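/- arXiv:1702.08895 — 4 statements merged into one kernel-verified Lean document; each statement's English description precedes it below -/
import Mathlib

section
/- Integrated variance bound for kernel density estimators (p = 2 case): Let d ≥ 1 and let K : ℝᵈ → ℝ be measurable with ∫ K(u)² du < ∞. For every probability density f on ℝᵈ, every h > 0 and every n ≥ 1, the kernel density estimator f̂_h(x) = (1/(n hᵈ)) Σ_{i=1}^n K((x − X_i)/h) based on X₁,…,Xₙ i.i.d. with density f satisfies ∫_{ℝᵈ} E[(f̂_h(x) − E f̂_h(x))²] dx ≤ (1/(n hᵈ)) ∫_{ℝᵈ} K(u)² du. -/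
/-!
For fixed `x`, the estimator `f̂_h(x)` is `h⁻ᵈ` times the sample mean of `g_x(X_i)`, where
`g_x(z) = K((x - z)/h)` and the `X_i` are i.i.d. with law `f(z) dz`. Its variance is therefore
`h⁻²ᵈ Var[g_x] / n ≤ h⁻²ᵈ E[g_x²] / n`. Integrating in `x`, the function
`x ↦ E[g_x²] = ∫ K((x - z)/h)² f(z) dz` is the convolution of `f` with `K(·/h)²`, whose integral
is `∫ f · hᵈ ∫ K² = hᵈ ∫ K²`.
-/

open MeasureTheory Real Filter

/-- The Parzen–Rosenblatt kernel density estimator with kernel `K` and bandwidth `h`,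
based on the sample `X`. -/
noncomputable def kde {d n : ℕ} (K : (Fin d → ℝ) → ℝ) (h : ℝ)
    (X : Fin n → Fin d → ℝ) (x : Fin d → ℝ) : ℝ :=
  (1 / (n * h ^ d)) * ∑ i, K (fun j => (x j - X i j) / h)

open ProbabilityTheory
open scoped ENNReal Convolution

namespace MeasureTheory

section ProductDensity

variable {E : Type*} {mE : MeasurableSpace E}

theorem lintegral_fin_nat_prod_eq_prod {n : ℕ} {μ : Fin n → Measure E} [∀ i, SigmaFinite (μ i)]
    {f : Fin n → E → ℝ≥0∞} (hf : ∀ i, Measurable (f i)) :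
    ∫⁻ x, ∏ i, f i (x i) ∂(Measure.pi μ) = ∏ i, ∫⁻ x, f i x ∂(μ i) := by
  induction n with
  | zero => simp
  | succ n ih =>
    calc
      _ = ∫⁻ x : E × (Fin n → E), f 0 x.1 * ∏ i : Fin n, f i.succ (x.2 i)
            ∂((μ 0).prod (Measure.pi fun i ↦ μ i.succ)) := by
        rw [← ((measurePreserving_piFinSuccAbove μ 0).symm).lintegral_comp_emb
          (MeasurableEquiv.measurableEmbedding _)]
        simp_rw [MeasurableEquiv.piFinSuccAbove_symm_apply, Fin.insertNthEquiv,
          Fin.prod_univ_succ, Fin.insertNth_zero, Equiv.coe_fn_mk, Fin.cons_succ,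
          Fin.zero_succAbove, cast_eq, Fin.cons_zero]
      _ = (∫⁻ x, f 0 x ∂μ 0) * ∏ i : Fin n, ∫⁻ x, f i.succ x ∂(μ i.succ) := by
        rw [← ih fun i ↦ hf i.succ, ← lintegral_prod_mul (hf 0).aemeasurable
          (Finset.univ.measurable_prod fun i _ ↦ (hf i.succ).comp (measurable_pi_apply i)).aemeasurable]
      _ = ∏ i, ∫⁻ x, f i x ∂(μ i) := (Fin.prod_univ_succ fun i ↦ ∫⁻ x, f i x ∂(μ i)).symm

theorem lintegral_fintype_prod_eq_prod {ι : Type*} [Fintype ι] {μ : ι → Measure E}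
    [∀ i, SigmaFinite (μ i)] {f : ι → E → ℝ≥0∞} (hf : ∀ i, Measurable (f i)) :
    ∫⁻ x, ∏ i, f i (x i) ∂(Measure.pi μ) = ∏ i, ∫⁻ x, f i x ∂(μ i) := by
  let e := (Fintype.equivFin ι).symm
  rw [← (measurePreserving_piCongrLeft μ e).lintegral_comp_emb
    (MeasurableEquiv.measurableEmbedding _)]
  simp_rw [← e.prod_comp, MeasurableEquiv.coe_piCongrLeft, Equiv.piCongrLeft_apply_apply]
  exact lintegral_fin_nat_prod_eq_prod fun i ↦ hf (e i)

theorem Measure.pi_withDensity {ι : Type*} [Fintype ι] {μ : ι → Measure E}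
    [∀ i, SigmaFinite (μ i)] {ρ : ι → E → ℝ≥0∞} (hρ : ∀ i, Measurable (ρ i))
    [∀ i, SigmaFinite ((μ i).withDensity (ρ i))] :
    Measure.pi (fun i ↦ (μ i).withDensity (ρ i))
      = (Measure.pi μ).withDensity fun x ↦ ∏ i, ρ i (x i) := by
  refine Measure.pi_eq fun s hs ↦ ?_
  rw [withDensity_apply _ (MeasurableSet.univ_pi hs), Measure.restrict_pi_pi,
    lintegral_fintype_prod_eq_prod hρ]
  exact Finset.prod_congr rfl fun i _ ↦ (withDensity_apply _ (hs i)).symm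

theorem integral_withDensity_ofReal {μ : Measure E} {f : E → ℝ} (hf : Measurable f)
    (hf0 : 0 ≤ᵐ[μ] f) (g : E → ℝ) :
    ∫ x, g x ∂μ.withDensity (fun x ↦ ENNReal.ofReal (f x)) = ∫ x, g x * f x ∂μ := by
  rw [integral_withDensity_eq_integral_toReal_smul hf.ennreal_ofReal
    (.of_forall fun _ ↦ ENNReal.ofReal_lt_top)]
  refine integral_congr_ae (hf0.mono fun x (hx : 0 ≤ f x) ↦ ?_)
  simp only [ENNReal.toReal_ofReal hx, smul_eq_mul, mul_comm]

theorem integrable_withDensity_ofReal_iff {μ : Measure E} {f : E → ℝ} (hf : Measurable f)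
    (hf0 : 0 ≤ᵐ[μ] f) {g : E → ℝ} :
    Integrable g (μ.withDensity fun x ↦ ENNReal.ofReal (f x))
      ↔ Integrable (fun x ↦ g x * f x) μ := by
  rw [integrable_withDensity_iff hf.ennreal_ofReal (.of_forall fun _ ↦ ENNReal.ofReal_lt_top)]
  exact integrable_congr (hf0.mono fun x (hx : 0 ≤ f x) ↦ by simp only [ENNReal.toReal_ofReal hx])

theorem isProbabilityMeasure_withDensity_ofReal {μ : Measure E} {f : E → ℝ} (hf0 : 0 ≤ᵐ[μ] f)
    (hf1 : ∫ x, f x ∂μ = 1) :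
    IsProbabilityMeasure (μ.withDensity fun x ↦ ENNReal.ofReal (f x)) := by
  have hfint : Integrable f μ := Integrable.of_integral_ne_zero (by simp [hf1])
  constructor
  rw [withDensity_apply _ MeasurableSet.univ, Measure.restrict_univ,
    ← ofReal_integral_eq_lintegral_ofReal hfint hf0, hf1, ENNReal.ofReal_one]

theorem integral_mul_prod_eq_integral_pi_withDensity {ι : Type*} [Fintype ι]
    {μ : ι → Measure E} [∀ i, SigmaFinite (μ i)] {f : ι → E → ℝ} (hf : ∀ i, Measurable (f i))
    (hf0 : ∀ i, 0 ≤ᵐ[μ i] f i) (F : (ι → E) → ℝ) :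
    ∫ x, F x * ∏ i, f i (x i) ∂(Measure.pi μ)
      = ∫ x, F x ∂(Measure.pi fun i ↦ (μ i).withDensity fun a ↦ ENNReal.ofReal (f i a)) := by
  have hprod0 : ∀ᵐ x ∂(Measure.pi μ), ∀ i, 0 ≤ f i (x i) :=
    ae_all_iff.2 fun i ↦ Measure.tendsto_eval_ae_ae.eventually (hf0 i)
  rw [Measure.pi_withDensity fun i ↦ (hf i).ennreal_ofReal,
    withDensity_congr_ae (hprod0.mono fun x hx ↦
      (ENNReal.ofReal_prod_of_nonneg fun i _ ↦ hx i).symm),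
    integral_withDensity_ofReal (by fun_prop)
      (hprod0.mono fun x hx ↦ Finset.prod_nonneg fun i _ ↦ hx i)]

end ProductDensity

end MeasureTheory

namespace ProbabilityTheory

variable {Ω : Type*} {mΩ : MeasurableSpace Ω}

theorem integral_sq_sampleMean_sub_integral {μ : Measure Ω} [IsProbabilityMeasure μ]
    {ι : Type*} [Fintype ι] [Nonempty ι] {g : Ω → ℝ} (hg : MemLp g 2 μ) :
    ∫ x, ((Fintype.card ι : ℝ)⁻¹ * ∑ i, g (x i) - μ[g]) ^ 2 ∂(Measure.pi fun _ : ι ↦ μ)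
      = Var[g; μ] / Fintype.card ι := by
  have hcard : (Fintype.card ι : ℝ) ≠ 0 := Nat.cast_ne_zero.2 Fintype.card_ne_zero
  have hint (i : ι) : Integrable (fun x : ι → Ω ↦ g (x i)) (Measure.pi fun _ ↦ μ) :=
    integrable_comp_eval (hg.integrable one_le_two)
  have hmean :
      ∫ x, (Fintype.card ι : ℝ)⁻¹ * ∑ i, g (x i) ∂(Measure.pi fun _ : ι ↦ μ) = μ[g] := by
    rw [integral_const_mul, integral_finsetSum _ fun i _ ↦ hint i,
      Finset.sum_congr rfl fun i _ ↦ integral_comp_eval (μ := fun _ ↦ μ) hg.aestronglyMeasurable,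
      Finset.sum_const, Finset.card_univ, nsmul_eq_mul, inv_mul_cancel_left₀ hcard]
  have hsum : (fun x : ι → Ω ↦ ∑ i, g (x i)) = ∑ i, fun x ↦ g (x i) := by
    ext x; simp
  rw [← hmean, ← variance_eq_integral
      ((integrable_finsetSum _ fun i _ ↦ hint i).const_mul _).aemeasurable,
    variance_const_mul, hsum, variance_sum_pi fun _ ↦ hg, Finset.sum_const, Finset.card_univ,
    nsmul_eq_mul]
  field_simp

theorem integral_sq_sampleMean_sub_mul_prod_le {μ : Measure Ω} [SigmaFinite μ] {f : Ω → ℝ}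
    (hf : Measurable f) (hf0 : 0 ≤ᵐ[μ] f) (hf1 : ∫ z, f z ∂μ = 1)
    {ι : Type*} [Fintype ι] [Nonempty ι] {g : Ω → ℝ} (hg : AEStronglyMeasurable g μ)
    (hg2 : Integrable (fun z ↦ g z ^ 2 * f z) μ) :
    ∫ x, ((Fintype.card ι : ℝ)⁻¹ * ∑ i, g (x i) - ∫ z, g z * f z ∂μ) ^ 2 * ∏ i, f (x i)
        ∂(Measure.pi fun _ : ι ↦ μ)
      ≤ (∫ z, g z ^ 2 * f z ∂μ) / Fintype.card ι := by
  set ν := μ.withDensity fun z ↦ ENNReal.ofReal (f z)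
  have : IsProbabilityMeasure ν := isProbabilityMeasure_withDensity_ofReal hf0 hf1
  have hgν : MemLp g 2 ν := by
    rw [memLp_two_iff_integrable_sq (hg.mono_ac (withDensity_absolutelyContinuous _ _)),
      integrable_withDensity_ofReal_iff hf hf0]
    exact hg2
  rw [integral_mul_prod_eq_integral_pi_withDensity (fun _ ↦ hf) (fun _ ↦ hf0),
    ← integral_withDensity_ofReal hf hf0, ← integral_withDensity_ofReal hf hf0,
    integral_sq_sampleMean_sub_integral hgν]
  gcongr
  exact variance_le_expectation_sq hgν.aestronglyMeasurable

end ProbabilityTheory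

section RescaledConvolution

variable {E : Type*} [NormedAddCommGroup E] [NormedSpace ℝ E] [MeasurableSpace E]
  {μ : Measure E} {g f : E → ℝ} {h : ℝ}

theorem integral_comp_inv_smul_sub_mul_eq_convolution (x : E) :
    ∫ z, g (h⁻¹ • (x - z)) * f z ∂μ
      = (f ⋆[ContinuousLinearMap.mul ℝ ℝ, μ] fun u ↦ g (h⁻¹ • u)) x := by
  simp only [convolution_def, ContinuousLinearMap.mul_apply', mul_comm (f _)]

variable [FiniteDimensional ℝ E] [BorelSpace E] [μ.IsAddHaarMeasure]

theorem ae_integrable_comp_inv_smul_sub_mul (hg : Integrable g μ) (hf : Integrable f μ)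
    (hh : h ≠ 0) : ∀ᵐ x ∂μ, Integrable (fun z ↦ g (h⁻¹ • (x - z)) * f z) μ := by
  have hgh : Integrable (fun u ↦ g (h⁻¹ • u)) μ :=
    (integrable_comp_smul_iff μ g (inv_ne_zero hh)).2 hg
  filter_upwards [hf.ae_convolution_exists (ContinuousLinearMap.mul ℝ ℝ) hgh] with x hx
  exact hx.congr (.of_forall fun z ↦ mul_comm _ _)

theorem integrable_integral_comp_inv_smul_sub_mul (hg : Integrable g μ) (hf : Integrable f μ)
    (hh : h ≠ 0) : Integrable (fun x ↦ ∫ z, g (h⁻¹ • (x - z)) * f z ∂μ) μ := by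
  simp_rw [integral_comp_inv_smul_sub_mul_eq_convolution]
  exact hf.integrable_convolution _ ((integrable_comp_smul_iff μ g (inv_ne_zero hh)).2 hg)

theorem integral_integral_comp_inv_smul_sub_mul (hg : Integrable g μ) (hf : Integrable f μ)
    (hh : 0 < h) :
    ∫ x, ∫ z, g (h⁻¹ • (x - z)) * f z ∂μ ∂μ
      = h ^ Module.finrank ℝ E * (∫ u, g u ∂μ) * ∫ z, f z ∂μ := by
  simp_rw [integral_comp_inv_smul_sub_mul_eq_convolution]
  rw [integral_convolution _ hf ((integrable_comp_smul_iff μ g (inv_ne_zero hh.ne')).2 hg),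
    Measure.integral_comp_inv_smul_of_nonneg μ g hh.le, ContinuousLinearMap.mul_apply',
    smul_eq_mul]
  ring

end RescaledConvolution

section KernelDensityEstimator

variable {d : ℕ} {K f : (Fin d → ℝ) → ℝ}

theorem div_bandwidth_eq_inv_smul (h : ℝ) (x z : Fin d → ℝ) :
    (fun i ↦ (x i - z i) / h) = h⁻¹ • (x - z) := by
  ext i
  simp [div_eq_inv_mul]

theorem kde_sub_eq {n : ℕ} (h c : ℝ) (X : Fin n → Fin d → ℝ) (x : Fin d → ℝ) :
    kde K h X x - 1 / h ^ d * c
      = (h ^ d)⁻¹ * ((n : ℝ)⁻¹ * ∑ i, K (h⁻¹ • (x - X i)) - c) := by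
  simp only [kde, div_bandwidth_eq_inv_smul]
  ring

theorem integral_sq_kde_sub_mul_prod_le {n : ℕ} [NeZero n] (hK : Measurable K)
    (hf : Measurable f) (hf0 : 0 ≤ᵐ[volume] f) (hf1 : ∫ z, f z = 1) (h : ℝ) (x : Fin d → ℝ)
    (hx : Integrable fun z ↦ K (h⁻¹ • (x - z)) ^ 2 * f z) :
    ∫ X : Fin n → Fin d → ℝ,
        (kde K h X x - 1 / h ^ d * ∫ z, K (h⁻¹ • (x - z)) * f z) ^ 2 * ∏ i, f (X i)
      ≤ (∫ z, K (h⁻¹ • (x - z)) ^ 2 * f z) / (n * (h ^ d) ^ 2) := by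
  simp_rw [kde_sub_eq, mul_pow, mul_assoc]
  rw [integral_const_mul, volume_pi]
  calc _ ≤ ((h ^ d)⁻¹) ^ 2 * ((∫ z, K (h⁻¹ • (x - z)) ^ 2 * f z) / n) := by
        gcongr
        simpa using integral_sq_sampleMean_sub_mul_prod_le (ι := Fin n) hf hf0 hf1
          (hK.comp (by fun_prop)).aestronglyMeasurable hx
    _ = _ := by field_simp

end KernelDensityEstimator

theorem kernel_density_estimator_integrated_variance_bound_general
    (d : ℕ)
    (K : (Fin d → ℝ) → ℝ) (hKmeas : Measurable K)
    (hK2 : Integrable (fun u : Fin d → ℝ => K u ^ 2))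
    (f : (Fin d → ℝ) → ℝ) (hfmeas : Measurable f)
    (hf0 : ∀ᵐ x : Fin d → ℝ, 0 ≤ f x) (hf1 : (∫ x : Fin d → ℝ, f x) = 1)
    (h : ℝ) (hh : 0 < h) (n : ℕ) (hn : 1 ≤ n) :
    (∫ x : Fin d → ℝ,
      ∫ X : Fin n → Fin d → ℝ,
        (kde K h X x -
          (1 / h ^ d) * (∫ z : Fin d → ℝ, K (fun i => (x i - z i) / h) * f z)) ^ 2
          * ∏ i, f (X i))
      ≤ (1 / ((n : ℝ) * h ^ d)) * ∫ u : Fin d → ℝ, K u ^ 2 := by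
  have : NeZero n := ⟨by omega⟩
  have hfint : Integrable f := Integrable.of_integral_ne_zero (by simp [hf1])
  simp_rw [div_bandwidth_eq_inv_smul]
  calc _ ≤ ∫ x : Fin d → ℝ, (∫ z, K (h⁻¹ • (x - z)) ^ 2 * f z) / (n * (h ^ d) ^ 2) := by
        refine integral_mono_of_nonneg (.of_forall fun x ↦ ?_)
          ((integrable_integral_comp_inv_smul_sub_mul hK2 hfint hh.ne').div_const _) ?_
        · dsimp only [Pi.zero_apply]
          rw [volume_pi, integral_mul_prod_eq_integral_pi_withDensity (fun _ ↦ hfmeas)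
            (fun _ ↦ hf0)]
          exact integral_nonneg fun _ ↦ sq_nonneg _
        · filter_upwards [ae_integrable_comp_inv_smul_sub_mul hK2 hfint hh.ne'] with x hx
          exact integral_sq_kde_sub_mul_prod_le hKmeas hfmeas hf0 hf1 h x hx
    _ = _ := by
        rw [integral_div, integral_integral_comp_inv_smul_sub_mul hK2 hfint hh,
          Module.finrank_fin_fun, hf1]
        field_simp

/-- integrated variance bound for kernel density estimators, `p = 2`.
For a square-integrable kernel `K`, any probability density `f`, any `h > 0` and `n ≥ 1`,
`∫ E[(f̂_h(x) − E f̂_h(x))²] dx ≤ (1/(n h^d)) ∫ K²`. -/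
theorem kernel_density_estimator_integrated_variance_bound
    (d : ℕ) (hd : 1 ≤ d)
    (K : (Fin d → ℝ) → ℝ) (hKmeas : Measurable K)
    (hK2 : Integrable (fun u : Fin d → ℝ => K u ^ 2))
    (f : (Fin d → ℝ) → ℝ) (hfmeas : Measurable f)
    (hf0 : ∀ᵐ x : Fin d → ℝ, 0 ≤ f x) (hf1 : (∫ x : Fin d → ℝ, f x) = 1)
    (h : ℝ) (hh : 0 < h) (n : ℕ) (hn : 1 ≤ n) :
    (∫ x : Fin d → ℝ,
      ∫ X : Fin n → Fin d → ℝ,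
        (kde K h X x -
          (1 / h ^ d) * (∫ z : Fin d → ℝ, K (fun i => (x i - z i) / h) * f z)) ^ 2
          * ∏ i, f (X i))
      ≤ (1 / ((n : ℝ) * h ^ d)) * ∫ u : Fin d → ℝ, K u ^ 2 :=
  kernel_density_estimator_integrated_variance_bound_general d K hKmeas hK2 f hfmeas hf0 hf1 h hh n
    hn
end

section
/- The perturbed functions are probability densities: Let β > 1, C > 0, d ≥ 1, σ > 0. Let φ(u) = (2π)^{−1/2} e^{−u²/2} and f₀(x) = σ^{−d} ∏_{i=1}^d φ(x_i/σ). Let Γ₀ : ℝ → ℝ be bounded and integrable with Γ₀(u) ≠ 0 only for u ∈ (−1/2, 1/2) and ∫ Γ₀ = 0; let Γ(u) = dC ∏_{i=1}^d Γ₀(u_i), γ_{m,j}(x) = m^{−β} Γ(mx − j) for j ∈ {1,…,m−1}ᵈ, and f_ω = f₀ + Σ_j ω(j) γ_{m,j} for ω ∈ {0,1}^{{1,…,m−1}ᵈ}. If m^β > d C (σ ‖Γ₀‖_∞ / φ(1/σ))ᵈ, then for every ω: f_ω(x) ≥ 0 for all x ∈ ℝᵈ and ∫_{ℝᵈ} f_ω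 = 1; in particular, the minimum of f₀ over [−1,1]ᵈ equals (φ(1/σ)/σ)ᵈ and exceeds the sup-norm of the perturbation, whose support is contained in [0,1]ᵈ. -/
/-!
Each `γ_{m,j}` has integral `m^(-β) d C (∫ Γ₀)^d / m^d = 0` and is supported in the open cube of
side `1/m` centred at `(j+1)/m`; these cubes are disjoint and lie in `[0,1]^d`. Hence
`Σ_j ω(j) γ_{m,j}` integrates to `0`, is supported in `[0,1]^d`, and at every point equals a single
`γ_{m,j}`, so its sup-norm is at most `m^(-β) d C ‖Γ₀‖_∞^d`. The hypothesis on `m^β` says exactly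
that this is below `(φ(1/σ)/σ)^d = min_{[-1,1]^d} f₀`, so `f_ω ≥ 0`.
-/

open MeasureTheory Real Filter

/-- The standard normal density `φ(u) = (2π)^(−1/2) e^(−u²/2)`. -/
noncomputable def stdNormal (u : ℝ) : ℝ := (Real.sqrt (2 * Real.pi))⁻¹ * Real.exp (-u ^ 2 / 2)

/-- The base density `f₀(x) = σ^(−d) ∏ᵢ φ(xᵢ/σ)`. -/
noncomputable def gaussBase (σ : ℝ) (d : ℕ) (x : Fin d → ℝ) : ℝ :=
  (σ ^ d)⁻¹ * ∏ i, stdNormal (x i / σ)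

/-- The perturbation `γ_{m,j}(x) = m^(−β) Γ(m x − j)` where `Γ(u) = d C ∏ᵢ Γ₀(uᵢ)` and the
multi-index `j : Fin d → Fin (m-1)` encodes `j ∈ {1, …, m−1}^d` via `jᵢ = (j i) + 1`. -/
noncomputable def gammaPert (β C : ℝ) (Γ₀ : ℝ → ℝ) (d m : ℕ)
    (j : Fin d → Fin (m - 1)) (x : Fin d → ℝ) : ℝ :=
  (m : ℝ) ^ (-β) * ((d : ℝ) * C * ∏ i, Γ₀ ((m : ℝ) * x i - (((j i : ℕ) : ℝ) + 1)))

/-- The perturbed function `f_ω = f₀ + Σ_j ω(j) γ_{m,j}`. -/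
noncomputable def perturbedDensity (β C σ : ℝ) (Γ₀ : ℝ → ℝ) (d m : ℕ)
    (ω : (Fin d → Fin (m - 1)) → Bool) (x : Fin d → ℝ) : ℝ :=
  gaussBase σ d x + ∑ j : Fin d → Fin (m - 1), ((ω j).toNat : ℝ) * gammaPert β C Γ₀ d m j x

open Finset

lemma abs_sum_lt_of_support_subsingleton {ι : Type*} [Fintype ι] {f : ι → ℝ} {c : ℝ}
    (hc : 0 < c) (hf : ∀ i, |f i| < c) (hsupp : (Function.support f).Subsingleton) :
    |∑ i, f i| < c := by
  rcases hsupp.eq_empty_or_singleton with h | ⟨i, hi⟩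
  · simp [Function.support_eq_empty_iff.mp h, hc]
  · rw [Fintype.sum_eq_single i fun k hk => Function.notMem_support.mp (by simp [hi, hk])]
    exact hf i

lemma add_nonneg_of_abs_lt_of_support_subset {α : Type*} {f p : α → ℝ} {S : Set α} {c : ℝ}
    (hf : ∀ x, 0 ≤ f x) (hfS : ∀ x ∈ S, c ≤ f x) (hp : ∀ x, |p x| < c)
    (hsupp : Function.support p ⊆ S) (x : α) : 0 ≤ f x + p x := by
  by_cases hx : p x = 0
  · simpa [hx] using hf x
  · linarith [hfS x (hsupp hx), neg_abs_le (p x), hp x]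

lemma stdNormal_eq_gaussianPDFReal : stdNormal = ProbabilityTheory.gaussianPDFReal 0 1 := by
  ext u
  simp [stdNormal, ProbabilityTheory.gaussianPDFReal]

lemma stdNormal_pos (u : ℝ) : 0 < stdNormal u := by
  unfold stdNormal
  positivity

lemma integrable_stdNormal : Integrable stdNormal :=
  stdNormal_eq_gaussianPDFReal ▸ ProbabilityTheory.integrable_gaussianPDFReal 0 1

lemma integral_stdNormal : ∫ u, stdNormal u = 1 :=
  stdNormal_eq_gaussianPDFReal ▸ ProbabilityTheory.integral_gaussianPDFReal_eq_one 0 one_ne_zero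

lemma stdNormal_le_of_abs_le_abs {a b : ℝ} (h : |a| ≤ |b|) : stdNormal b ≤ stdNormal a := by
  have hsq := sq_le_sq.mpr h
  unfold stdNormal
  gcongr _ * exp ?_
  linarith

section GaussBase

variable {σ : ℝ} {d : ℕ}

lemma gaussBase_eq_prod (x : Fin d → ℝ) :
    gaussBase σ d x = ∏ i, stdNormal (x i / σ) / σ := by
  simp only [gaussBase, div_eq_mul_inv, prod_mul_distrib, prod_const, card_univ,
    Fintype.card_fin, inv_pow]
  ring

lemma gaussBase_nonneg (hσ : 0 ≤ σ) (x : Fin d → ℝ) : 0 ≤ gaussBase σ d x := by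
  rw [gaussBase_eq_prod]
  exact prod_nonneg fun i _ => div_nonneg (stdNormal_pos _).le hσ

lemma integrable_gaussBase (hσ : σ ≠ 0) : Integrable (gaussBase σ d) :=
  (Integrable.fintype_prod (f := fun (_ : Fin d) u => stdNormal (u / σ))
    fun _ => integrable_stdNormal.comp_div hσ).const_mul _

lemma integral_gaussBase (hσ : 0 < σ) : ∫ x, gaussBase σ d x = 1 := by
  have h1 : ∫ u, stdNormal (u / σ) = σ := by
    rw [Measure.integral_comp_div stdNormal σ, integral_stdNormal, abs_of_pos hσ, smul_eq_mul,
      mul_one]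
  simp only [gaussBase]
  rw [integral_const_mul, integral_fintype_prod_volume_eq_pow (fun u => stdNormal (u / σ)), h1,
    Fintype.card_fin]
  exact inv_mul_cancel₀ (by positivity)

lemma isLeast_gaussBase_image_Icc (hσ : 0 < σ) :
    IsLeast (gaussBase σ d '' Set.Icc (fun _ => (-1 : ℝ)) (fun _ => (1 : ℝ)))
      ((stdNormal (1 / σ) / σ) ^ d) := by
  refine ⟨⟨fun _ => 1, ⟨fun _ => by norm_num, fun _ => le_rfl⟩,
    by simp [gaussBase_eq_prod, div_pow]⟩, ?_⟩
  rintro _ ⟨x, hx, rfl⟩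
  rw [gaussBase_eq_prod, ← Fin.prod_const]
  gcongr with i
  · exact fun i _ => div_nonneg (stdNormal_pos _).le hσ.le
  · apply stdNormal_le_of_abs_le_abs
    rw [abs_div, abs_div, abs_one]
    exact div_le_div_of_nonneg_right (abs_le.mpr ⟨hx.1 i, hx.2 i⟩) (abs_nonneg σ)

end GaussBase

noncomputable def perturbation (β C : ℝ) (Γ₀ : ℝ → ℝ) (d m : ℕ)
    (ω : (Fin d → Fin (m - 1)) → Bool) (x : Fin d → ℝ) : ℝ :=
  ∑ j : Fin d → Fin (m - 1), ((ω j).toNat : ℝ) * gammaPert β C Γ₀ d m j x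

section Perturbation

variable {β C : ℝ} {Γ₀ : ℝ → ℝ} {d m : ℕ}

lemma abs_sub_lt_of_gammaPert_ne_zero
    (hΓsupp : ∀ u : ℝ, Γ₀ u ≠ 0 → u ∈ Set.Ioo (-(1 / 2) : ℝ) (1 / 2))
    {j : Fin d → Fin (m - 1)} {x : Fin d → ℝ} (h : gammaPert β C Γ₀ d m j x ≠ 0) (i : Fin d) :
    |(m : ℝ) * x i - (((j i : ℕ) : ℝ) + 1)| < 1 / 2 := by
  have hprod := right_ne_zero_of_mul (right_ne_zero_of_mul h)
  exact abs_lt.mpr (hΓsupp _ (prod_ne_zero_iff.mp hprod i (mem_univ i)))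

lemma eq_of_gammaPert_ne_zero
    (hΓsupp : ∀ u : ℝ, Γ₀ u ≠ 0 → u ∈ Set.Ioo (-(1 / 2) : ℝ) (1 / 2))
    {j k : Fin d → Fin (m - 1)} {x : Fin d → ℝ}
    (hj : gammaPert β C Γ₀ d m j x ≠ 0) (hk : gammaPert β C Γ₀ d m k x ≠ 0) : j = k := by
  funext i
  have hji := abs_lt.mp (abs_sub_lt_of_gammaPert_ne_zero hΓsupp hj i)
  have hki := abs_lt.mp (abs_sub_lt_of_gammaPert_ne_zero hΓsupp hk i)
  have h1 : (j i : ℕ) < k i + 1 := by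
    exact_mod_cast (by linarith : ((j i : ℕ) : ℝ) < (k i : ℕ) + 1)
  have h2 : (k i : ℕ) < j i + 1 := by
    exact_mod_cast (by linarith : ((k i : ℕ) : ℝ) < (j i : ℕ) + 1)
  exact Fin.ext (by omega)

lemma mem_Icc_of_gammaPert_ne_zero
    (hΓsupp : ∀ u : ℝ, Γ₀ u ≠ 0 → u ∈ Set.Ioo (-(1 / 2) : ℝ) (1 / 2))
    {j : Fin d → Fin (m - 1)} {x : Fin d → ℝ} (h : gammaPert β C Γ₀ d m j x ≠ 0) :
    x ∈ Set.Icc (fun _ => (0 : ℝ)) (fun _ => (1 : ℝ)) := by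
  refine ⟨fun i => ?_, fun i => ?_⟩ <;>
  · have hxi := abs_lt.mp (abs_sub_lt_of_gammaPert_ne_zero hΓsupp h i)
    have hjm : ((j i : ℕ) : ℝ) + 2 ≤ m := by
      exact_mod_cast (by have := (j i).isLt; omega : (j i : ℕ) + 2 ≤ m)
    have hj0 : (0 : ℝ) ≤ (j i : ℕ) := Nat.cast_nonneg _
    dsimp only
    nlinarith

lemma support_perturbation_subset
    (hΓsupp : ∀ u : ℝ, Γ₀ u ≠ 0 → u ∈ Set.Ioo (-(1 / 2) : ℝ) (1 / 2))
    (ω : (Fin d → Fin (m - 1)) → Bool) :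
    Function.support (perturbation β C Γ₀ d m ω) ⊆
      Set.Icc (fun _ => (0 : ℝ)) (fun _ => (1 : ℝ)) := by
  intro x hx
  obtain ⟨j, -, hj⟩ := exists_ne_zero_of_sum_ne_zero hx
  exact mem_Icc_of_gammaPert_ne_zero hΓsupp (right_ne_zero_of_mul hj)

lemma abs_gammaPert_le (hC : 0 ≤ C) {M : ℝ} (hM : ∀ u, |Γ₀ u| ≤ M)
    (j : Fin d → Fin (m - 1)) (x : Fin d → ℝ) :
    |gammaPert β C Γ₀ d m j x| ≤ (m : ℝ) ^ (-β) * ((d : ℝ) * C * M ^ d) := by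
  have hprod : |∏ i, Γ₀ ((m : ℝ) * x i - (((j i : ℕ) : ℝ) + 1))| ≤ M ^ d := by
    rw [abs_prod, ← Fin.prod_const]
    exact prod_le_prod (fun _ _ => abs_nonneg _) fun _ _ => hM _
  rw [gammaPert, abs_mul, abs_mul, abs_of_nonneg (by positivity : (0 : ℝ) ≤ (m : ℝ) ^ (-β)),
    abs_of_nonneg (by positivity : (0 : ℝ) ≤ d * C)]
  gcongr

lemma abs_gammaPert_lt (hC : 0 ≤ C) {σ M : ℝ} (hσ : 0 < σ) (hM : ∀ u, |Γ₀ u| ≤ M)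
    (hmβ : (d : ℝ) * C * (σ * M / stdNormal (1 / σ)) ^ d < (m : ℝ) ^ β)
    (j : Fin d → Fin (m - 1)) (x : Fin d → ℝ) :
    |gammaPert β C Γ₀ d m j x| < (stdNormal (1 / σ) / σ) ^ d := by
  have hφ := stdNormal_pos (1 / σ)
  have hM0 : 0 ≤ M := (abs_nonneg _).trans (hM 0)
  have hmβ0 : 0 < (m : ℝ) ^ β := lt_of_le_of_lt (by positivity) hmβ
  have hscale : (d : ℝ) * C * M ^ d =
      (d : ℝ) * C * (σ * M / stdNormal (1 / σ)) ^ d * (stdNormal (1 / σ) / σ) ^ d := by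
    rw [mul_assoc _ (_ ^ d), ← mul_pow]
    field_simp
  calc |gammaPert β C Γ₀ d m j x| ≤ (m : ℝ) ^ (-β) * ((d : ℝ) * C * M ^ d) :=
        abs_gammaPert_le hC hM j x
    _ < (m : ℝ) ^ (-β) * ((m : ℝ) ^ β * (stdNormal (1 / σ) / σ) ^ d) := by
        rw [hscale, rpow_neg (Nat.cast_nonneg m)]
        gcongr
    _ = (stdNormal (1 / σ) / σ) ^ d := by
        rw [rpow_neg (Nat.cast_nonneg m), inv_mul_cancel_left₀ hmβ0.ne']

lemma abs_perturbation_lt (hC : 0 ≤ C) {σ M : ℝ} (hσ : 0 < σ)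
    (hΓsupp : ∀ u : ℝ, Γ₀ u ≠ 0 → u ∈ Set.Ioo (-(1 / 2) : ℝ) (1 / 2)) (hM : ∀ u, |Γ₀ u| ≤ M)
    (hmβ : (d : ℝ) * C * (σ * M / stdNormal (1 / σ)) ^ d < (m : ℝ) ^ β)
    (ω : (Fin d → Fin (m - 1)) → Bool) (x : Fin d → ℝ) :
    |perturbation β C Γ₀ d m ω x| < (stdNormal (1 / σ) / σ) ^ d := by
  have hφ := stdNormal_pos (1 / σ)
  refine abs_sum_lt_of_support_subsingleton (by positivity) (fun j => ?_)
    fun j hj k hk => eq_of_gammaPert_ne_zero hΓsupp (right_ne_zero_of_mul hj)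
      (right_ne_zero_of_mul hk)
  rw [abs_mul]
  exact (mul_le_of_le_one_left (abs_nonneg _) (by cases ω j <;> simp)).trans_lt
    (abs_gammaPert_lt hC hσ hM hmβ j x)

lemma integrable_gammaPert (hΓint : Integrable Γ₀) (j : Fin d → Fin (m - 1)) :
    Integrable (gammaPert β C Γ₀ d m j) := by
  refine ((Integrable.fintype_prod
    (f := fun i u => Γ₀ ((m : ℝ) * u - (((j i : ℕ) : ℝ) + 1))) fun i => ?_).const_mul _).const_mul _
  have hm : (m : ℝ) ≠ 0 := by exact_mod_cast (by have := (j i).isLt; omega : m ≠ 0)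
  exact (hΓint.comp_sub_right _).comp_mul_left' hm

lemma integral_gammaPert (hd : 1 ≤ d) (hΓ0 : ∫ u, Γ₀ u = 0) (j : Fin d → Fin (m - 1)) :
    ∫ x, gammaPert β C Γ₀ d m j x = 0 := by
  have hfactor (i : Fin d) : ∫ u, Γ₀ ((m : ℝ) * u - (((j i : ℕ) : ℝ) + 1)) = 0 := by
    rw [Measure.integral_comp_mul_left (fun v => Γ₀ (v - (((j i : ℕ) : ℝ) + 1))),
      integral_sub_right_eq_self, hΓ0, smul_zero]
  simp only [gammaPert]
  rw [integral_const_mul, integral_const_mul,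
    integral_fintype_prod_volume_eq_prod (fun i u => Γ₀ ((m : ℝ) * u - (((j i : ℕ) : ℝ) + 1))),
    prod_eq_zero (mem_univ ⟨0, hd⟩) (hfactor _), mul_zero, mul_zero]

lemma integrable_perturbation (hΓint : Integrable Γ₀) (ω : (Fin d → Fin (m - 1)) → Bool) :
    Integrable (perturbation β C Γ₀ d m ω) :=
  integrable_finsetSum _ fun j _ => (integrable_gammaPert hΓint j).const_mul _

lemma integral_perturbation (hd : 1 ≤ d) (hΓint : Integrable Γ₀) (hΓ0 : ∫ u, Γ₀ u = 0)
    (ω : (Fin d → Fin (m - 1)) → Bool) : ∫ x, perturbation β C Γ₀ d m ω x = 0 := by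
  unfold perturbation
  rw [integral_finsetSum _ fun j _ => (integrable_gammaPert hΓint j).const_mul _]
  exact sum_eq_zero fun j _ => by rw [integral_const_mul, integral_gammaPert hd hΓ0, mul_zero]

end Perturbation

lemma integral_perturbedDensity {β C σ : ℝ} {Γ₀ : ℝ → ℝ} {d m : ℕ} (hσ : 0 < σ) (hd : 1 ≤ d)
    (hΓint : Integrable Γ₀) (hΓ0 : ∫ u, Γ₀ u = 0) (ω : (Fin d → Fin (m - 1)) → Bool) :
    ∫ x, perturbedDensity β C σ Γ₀ d m ω x = 1 := by
  change ∫ x, gaussBase σ d x + perturbation β C Γ₀ d m ω x = 1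
  rw [integral_add (integrable_gaussBase hσ.ne') (integrable_perturbation hΓint ω),
    integral_gaussBase hσ, integral_perturbation hd hΓint hΓ0, add_zero]

theorem perturbed_functions_are_densities_general
    (β C σ : ℝ) (hC : 0 < C) (hσ : 0 < σ) (d : ℕ) (hd : 1 ≤ d)
    (Γ₀ : ℝ → ℝ) (hΓint : Integrable Γ₀)
    (hΓbd : ∃ M : ℝ, ∀ u, |Γ₀ u| ≤ M)
    (hΓsupp : ∀ u : ℝ, Γ₀ u ≠ 0 → u ∈ Set.Ioo (-(1 / 2) : ℝ) (1 / 2))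
    (hΓ0 : (∫ u : ℝ, Γ₀ u) = 0)
    (m : ℕ)
    (hmβ : (d : ℝ) * C * (σ * (⨆ u : ℝ, |Γ₀ u|) / stdNormal (1 / σ)) ^ d < (m : ℝ) ^ β) :
    ∀ ω : (Fin d → Fin (m - 1)) → Bool,
      (∀ x : Fin d → ℝ, 0 ≤ perturbedDensity β C σ Γ₀ d m ω x) ∧
      (∫ x : Fin d → ℝ, perturbedDensity β C σ Γ₀ d m ω x) = 1 ∧
      IsLeast (gaussBase σ d '' Set.Icc (fun _ => (-1 : ℝ)) (fun _ => (1 : ℝ)))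
        ((stdNormal (1 / σ) / σ) ^ d) ∧
      (∀ x : Fin d → ℝ,
        |∑ j : Fin d → Fin (m - 1), ((ω j).toNat : ℝ) * gammaPert β C Γ₀ d m j x|
          < (stdNormal (1 / σ) / σ) ^ d) ∧
      Function.support
          (fun x : Fin d → ℝ =>
            ∑ j : Fin d → Fin (m - 1), ((ω j).toNat : ℝ) * gammaPert β C Γ₀ d m j x)
        ⊆ Set.Icc (fun _ => (0 : ℝ)) (fun _ => (1 : ℝ)) := by
  intro ω
  obtain ⟨B, hB⟩ := hΓbd
  have hM : ∀ u, |Γ₀ u| ≤ ⨆ u, |Γ₀ u| := le_ciSup ⟨B, by rintro _ ⟨u, rfl⟩; exact hB u⟩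
  have hmin := isLeast_gaussBase_image_Icc (d := d) hσ
  have hsupp := support_perturbation_subset (β := β) (C := C) hΓsupp ω
  have hbound := abs_perturbation_lt hC.le hσ hΓsupp hM hmβ ω
  have hcube : Set.Icc (fun _ => (0 : ℝ)) (fun _ => 1) ⊆
      Set.Icc (fun _ : Fin d => (-1 : ℝ)) (fun _ => 1) :=
    Set.Icc_subset_Icc_left fun _ => by norm_num
  exact ⟨add_nonneg_of_abs_lt_of_support_subset (gaussBase_nonneg hσ.le)
      (fun x hx => hmin.2 ⟨x, hcube hx, rfl⟩) hbound hsupp,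
    integral_perturbedDensity hσ hd hΓint hΓ0 ω, hmin, hbound, hsupp⟩

/-- the perturbed functions are probability densities. If
`m^β > d C (σ ‖Γ₀‖_∞ / φ(1/σ))^d` then every `f_ω` is nonnegative and integrates to `1`;
moreover the minimum of `f₀` over `[−1,1]^d` equals `(φ(1/σ)/σ)^d`, it strictly exceeds
the sup-norm of the perturbation, and the perturbation is supported in `[0,1]^d`. -/
theorem perturbed_functions_are_densities
    (β C σ : ℝ) (hβ : 1 < β) (hC : 0 < C) (hσ : 0 < σ) (d : ℕ) (hd : 1 ≤ d)
    (Γ₀ : ℝ → ℝ) (hΓmeas : Measurable Γ₀) (hΓint : Integrable Γ₀)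
    (hΓbd : ∃ M : ℝ, ∀ u, |Γ₀ u| ≤ M)
    (hΓsupp : ∀ u : ℝ, Γ₀ u ≠ 0 → u ∈ Set.Ioo (-(1 / 2) : ℝ) (1 / 2))
    (hΓ0 : (∫ u : ℝ, Γ₀ u) = 0)
    (m : ℕ) (hm : 2 ≤ m)
    (hmβ : (d : ℝ) * C * (σ * (⨆ u : ℝ, |Γ₀ u|) / stdNormal (1 / σ)) ^ d < (m : ℝ) ^ β) :
    ∀ ω : (Fin d → Fin (m - 1)) → Bool,
      (∀ x : Fin d → ℝ, 0 ≤ perturbedDensity β C σ Γ₀ d m ω x) ∧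
      (∫ x : Fin d → ℝ, perturbedDensity β C σ Γ₀ d m ω x) = 1 ∧
      IsLeast (gaussBase σ d '' Set.Icc (fun _ => (-1 : ℝ)) (fun _ => (1 : ℝ)))
        ((stdNormal (1 / σ) / σ) ^ d) ∧
      (∀ x : Fin d → ℝ,
        |∑ j : Fin d → Fin (m - 1), ((ω j).toNat : ℝ) * gammaPert β C Γ₀ d m j x|
          < (stdNormal (1 / σ) / σ) ^ d) ∧
      Function.support
          (fun x : Fin d → ℝ =>
            ∑ j : Fin d → Fin (m - 1), ((ω j).toNat : ℝ) * gammaPert β C Γ₀ d m j x)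
        ⊆ Set.Icc (fun _ => (0 : ℝ)) (fun _ => (1 : ℝ)) :=
  perturbed_functions_are_densities_general β C σ hC hσ d hd Γ₀ hΓint hΓbd hΓsupp hΓ0 m hmβ
end

section
/- Varshamov–Gilbert bound: Let N ≥ 8. There exists a subset D of the binary hypercube {0,1}^N containing the zero vector such that |D| ≥ 2^{N/8} and for every pair of distinct elements ω, ω′ ∈ D the Hamming distance satisfies H(ω, ω′) = Σ_{i=1}^N 1{ω_i ≠ ω′_i} ≥ N/8. -/
/-!
Take a maximal set `D` of binary words that contains `0` and whose distinct points are at Hamming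
distance `> ⌊N/8⌋`. By maximality the balls of radius `m = ⌊N/8⌋` around `D` cover `{0,1}^N`, so
`2^N ≤ |D| · ∑_{k ≤ m} C(N,k)`. Weighting the binomial expansion of `8^N = (7 + 1)^N` gives
`∑_{k ≤ m} C(N,k) ≤ 8^N / 7^(N-m)`, and since `8^8 ≤ 14^7` this forces `|D|^8 ≥ 2^N`.
-/

open Finset

section Covering

variable {ι : Type*} [Fintype ι] [DecidableEq ι] {β : ι → Type*} [∀ i, DecidableEq (β i)]
  [∀ i, Fintype (β i)]

def hammingBall (y : ∀ i, β i) (r : ℕ) : Finset (∀ i, β i) :=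
  {x | hammingDist x y ≤ r}

theorem mem_hammingBall {x y : ∀ i, β i} {r : ℕ} : x ∈ hammingBall y r ↔ hammingDist x y ≤ r := by
  simp [hammingBall]

theorem exists_separated_subset_biUnion_hammingBall (x₀ : ∀ i, β i) (r : ℕ) :
    ∃ D : Finset (∀ i, β i), x₀ ∈ D ∧
      (∀ x ∈ D, ∀ y ∈ D, x ≠ y → r < hammingDist x y) ∧
      univ ⊆ D.biUnion (hammingBall · r) := by
  classical
  set Separated : Finset (∀ i, β i) → Prop :=
    fun D => x₀ ∈ D ∧ ∀ x ∈ D, ∀ y ∈ D, x ≠ y → r < hammingDist x y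
  have h₀ : Separated {x₀} := by simp [Separated]
  obtain ⟨D, hD, hmax⟩ := exists_max_image {D | Separated D} card ⟨{x₀}, by simpa using h₀⟩
  obtain ⟨hx₀, hsep⟩ := (mem_filter.mp hD).2
  refine ⟨D, hx₀, hsep, fun x _ => ?_⟩
  by_contra hx
  have hfar : ∀ y ∈ D, r < hammingDist x y := by
    simpa [mem_hammingBall] using hx
  have hxD : x ∉ D := fun h => by simpa using hfar x h
  have hins : Separated (insert x D) := by
    refine ⟨mem_insert_of_mem hx₀, ?_⟩
    simp only [mem_insert]
    rintro a (rfl | ha) b (rfl | hb) hab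
    · exact absurd rfl hab
    · exact hfar b hb
    · exact hammingDist_comm a _ ▸ hfar a ha
    · exact hsep a ha b hb hab
  have := hmax _ (by simpa using hins)
  rw [card_insert_of_notMem hxD] at this
  omega

end Covering

section Binary

variable {ι : Type*} [Fintype ι] [DecidableEq ι]

theorem card_hammingBall_le (y : ι → Bool) (r : ℕ) :
    #(hammingBall y r) ≤ ∑ k ∈ range (r + 1), (Fintype.card ι).choose k := by
  set support : (ι → Bool) → Finset ι := fun x => {i | x i ≠ y i}
  have hinj : Set.InjOn support (hammingBall y r) := fun x _ x' _ h => by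
    funext i
    have : x i ≠ y i ↔ x' i ≠ y i := by simpa [support] using Finset.ext_iff.mp h i
    revert this
    cases x i <;> cases x' i <;> cases y i <;> simp
  calc #(hammingBall y r)
      ≤ #((range (r + 1)).biUnion fun k => powersetCard k univ) := by
        refine card_le_card_of_injOn support (fun x hx => ?_) hinj
        simp only [coe_biUnion, coe_range, Set.mem_iUnion, mem_coe, mem_powersetCard,
          subset_univ, true_and, Set.mem_Iio, exists_prop]
        exact ⟨_, Nat.lt_succ_of_le (mem_hammingBall.mp hx), rfl⟩
    _ ≤ ∑ k ∈ range (r + 1), #(powersetCard k (univ : Finset ι)) := card_biUnion_le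
    _ = ∑ k ∈ range (r + 1), (Fintype.card ι).choose k := by simp [card_powersetCard]

theorem two_pow_le_card_mul_sum_choose {D : Finset (ι → Bool)} {r : ℕ}
    (hD : univ ⊆ D.biUnion (hammingBall · r)) :
    2 ^ Fintype.card ι ≤ #D * ∑ k ∈ range (r + 1), (Fintype.card ι).choose k := by
  calc 2 ^ Fintype.card ι = #(univ : Finset (ι → Bool)) := by simp
    _ ≤ #(D.biUnion (hammingBall · r)) := card_le_card hD
    _ ≤ ∑ y ∈ D, #(hammingBall y r) := card_biUnion_le
    _ ≤ #D * ∑ k ∈ range (r + 1), (Fintype.card ι).choose k :=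
        sum_le_card_nsmul D _ _ fun y _ => card_hammingBall_le y r

end Binary

theorem sum_choose_mul_pow_le (n m : ℕ) {a : ℕ} (ha : 0 < a) :
    (∑ k ∈ range (m + 1), n.choose k) * a ^ (n - m) ≤ (a + 1) ^ n := by
  calc (∑ k ∈ range (m + 1), n.choose k) * a ^ (n - m)
      ≤ ∑ k ∈ range (m + 1), n.choose k * a ^ (n - k) := by
        rw [sum_mul]
        gcongr with k hk
        exact Nat.lt_succ_iff.mp (mem_range.mp hk)
    _ ≤ ∑ k ∈ range (n + 1), n.choose k * a ^ (n - k) := by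
        refine sum_le_sum_of_ne_zero fun k _ hk => mem_range.mpr (Nat.lt_succ_of_le ?_)
        by_contra! h
        simp [Nat.choose_eq_zero_of_lt h] at hk
    _ = (a + 1) ^ n := by
        rw [add_comm a 1, add_pow]
        simp [mul_comm]

theorem two_pow_le_pow_eight_of_mul_le {c m N : ℕ} (hm : 8 * m ≤ N)
    (h : 2 ^ N * 7 ^ (N - m) ≤ c * 8 ^ N) : 2 ^ N ≤ c ^ 8 := by
  refine Nat.le_of_mul_le_mul_right ?_ (pow_pos (by norm_num : 0 < (8 : ℕ) ^ N) 8)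
  calc 2 ^ N * (8 ^ N) ^ 8 = 2 ^ N * (8 ^ 8) ^ N := by rw [← pow_mul, ← pow_mul, mul_comm 8 N]
    _ ≤ 2 ^ N * (14 ^ 7) ^ N := Nat.mul_le_mul_left _ (Nat.pow_le_pow_left (by norm_num) N)
    _ = (2 ^ N) ^ 8 * 7 ^ (7 * N) := by
        rw [show (14 : ℕ) = 2 * 7 by rfl, mul_pow, mul_pow, ← pow_mul, ← pow_mul, ← pow_mul]
        ring
    _ ≤ (2 ^ N) ^ 8 * 7 ^ (8 * (N - m)) :=
        Nat.mul_le_mul_left _ (Nat.pow_le_pow_right (by norm_num) (by omega))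
    _ = (2 ^ N * 7 ^ (N - m)) ^ 8 := by ring
    _ ≤ (c * 8 ^ N) ^ 8 := by gcongr
    _ = c ^ 8 * (8 ^ N) ^ 8 := by ring

theorem varshamov_gilbert_general (N : ℕ) :
    ∃ D : Finset (Fin N → Bool),
      (fun _ => false) ∈ D ∧
      (2 : ℝ) ^ ((N : ℝ) / 8) ≤ (D.card : ℝ) ∧
      ∀ ω ∈ D, ∀ ω' ∈ D, ω ≠ ω' → (N : ℝ) / 8 ≤ (hammingDist ω ω' : ℝ) := by
  obtain ⟨D, h₀, hsep, hcover⟩ :=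
    exists_separated_subset_biUnion_hammingBall (fun _ : Fin N => false) (N / 8)
  have hcount := two_pow_le_card_mul_sum_choose hcover
  rw [Fintype.card_fin] at hcount
  have hcard : 2 ^ N ≤ #D ^ 8 := by
    refine two_pow_le_pow_eight_of_mul_le (by omega : 8 * (N / 8) ≤ N) ?_
    calc 2 ^ N * 7 ^ (N - N / 8)
        ≤ #D * (∑ k ∈ range (N / 8 + 1), N.choose k) * 7 ^ (N - N / 8) :=
          Nat.mul_le_mul_right _ hcount
      _ ≤ #D * 8 ^ N := by
          rw [mul_assoc]
          exact Nat.mul_le_mul_left _ (sum_choose_mul_pow_le N (N / 8) (by norm_num))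
  refine ⟨D, h₀, ?_, fun ω hω ω' hω' hne => ?_⟩
  · refine le_of_pow_le_pow_left₀ (n := 8) (by norm_num) (Nat.cast_nonneg _) ?_
    rw [← Real.rpow_natCast, ← Real.rpow_mul zero_le_two, Nat.cast_ofNat,
      div_mul_cancel₀ _ (by norm_num), Real.rpow_natCast]
    exact_mod_cast hcard
  · have := hsep ω hω ω' hω' hne
    rw [div_le_iff₀ (by norm_num)]
    exact_mod_cast (by omega : N ≤ hammingDist ω ω' * 8)

/-- Varshamov–Gilbert bound. For `N ≥ 8` there is a subset `D` of the
binary hypercube `{0,1}^N` containing the zero vector, of cardinality at least `2^(N/8)`,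
whose distinct elements are at Hamming distance at least `N/8` from each other. -/
theorem varshamov_gilbert (N : ℕ) (hN : 8 ≤ N) :
    ∃ D : Finset (Fin N → Bool),
      (fun _ => false) ∈ D ∧
      (2 : ℝ) ^ ((N : ℝ) / 8) ≤ (D.card : ℝ) ∧
      ∀ ω ∈ D, ∀ ω' ∈ D, ω ≠ ω' → (N : ℝ) / 8 ≤ (hammingDist ω ω' : ℝ) :=
  varshamov_gilbert_general N
end

section
/- The minimax rate tends to zero under slowly growing dimension: Let β > 0 be fixed and let d : ℕ → ℤ⁺ be any sequence satisfying d(n) · log d(n) = o(log n) as n → ∞ (equivalently, d(n) = o(β log n / W(β log n)) where W is the Lambert W function). Then ψ_{n,d(n)} := ( d(n)^{d(n)} / n^β )^{1/(2β + d(n))} → 0 as n → ∞. -/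
open MeasureTheory Real Filter

/-- the minimax rate tends to zero under slowly growing dimension. If
`d(n) log d(n) = o(log n)` then `ψ_{n,d(n)} = (d(n)^{d(n)} / n^β)^{1/(2β + d(n))} → 0`. -/
theorem minimax_rate_tendsto_zero
    (β : ℝ) (hβ : 0 < β) (d : ℕ → ℕ) (hd : ∀ n, 0 < d n)
    (ho : (fun n : ℕ => (d n : ℝ) * Real.log (d n)) =o[atTop] fun n : ℕ => Real.log n) :
    Tendsto
      (fun n : ℕ => (((d n : ℝ) ^ (d n : ℝ)) / (n : ℝ) ^ β) ^ (1 / (2 * β + d n)))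
      atTop (nhds 0) := by
  have hd1 : ∀ n, (1:ℝ) ≤ (d n : ℝ) := fun n => by exact_mod_cast hd n
  have hdpos : ∀ n, (0:ℝ) < 2 * β + d n := fun n => by
    have := hd1 n; nlinarith
  have hlog : Tendsto (fun n : ℕ => Real.log n) atTop atTop :=
    tendsto_log_atTop.comp tendsto_natCast_atTop_atTop
  have hA : Tendsto (fun n : ℕ => (d n : ℝ) * Real.log (d n) / Real.log n)
      atTop (nhds 0) := ho.tendsto_div_nhds_zero
  -- d ≤ 2 + d log d
  have hdle : ∀ n, (d n : ℝ) ≤ 2 + (d n : ℝ) * Real.log (d n) := by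
    intro n
    have hlg : 0 ≤ Real.log (d n) := Real.log_nonneg (hd1 n)
    rcases le_or_gt ((d n : ℝ)) 2 with h | h
    · nlinarith
    · have h3 : (1:ℝ) ≤ Real.log (d n) := by
        rw [Real.le_log_iff_exp_le (by linarith)]
        have h2 : 2 < d n := by exact_mod_cast h
        have h3 : (3:ℝ) ≤ (d n : ℝ) := by exact_mod_cast h2
        calc Real.exp 1 ≤ 2.7182818286 := Real.exp_one_lt_d9.le
        _ ≤ (d n : ℝ) := by linarith
      nlinarith
  -- d / log n → 0
  have hB : Tendsto (fun n : ℕ => (d n : ℝ) / Real.log n) atTop (nhds 0) := by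
    have h2 : Tendsto (fun n : ℕ => (2 + (d n : ℝ) * Real.log (d n)) / Real.log n)
        atTop (nhds 0) := by
      have h2' : Tendsto (fun n : ℕ => 2 / Real.log n
          + (d n : ℝ) * Real.log (d n) / Real.log n) atTop (nhds 0) := by
        have := (tendsto_const_nhds (x := (2:ℝ)) (f := atTop)).div_atTop hlog |>.add hA
        simpa using this
      refine h2'.congr fun n => ?_
      rw [add_div]
    refine squeeze_zero' ?_ ?_ h2
    · filter_upwards [hlog.eventually_gt_atTop 0] with n hn
      have := hd1 n; positivity
    · filter_upwards [hlog.eventually_gt_atTop 0] with n hn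
      gcongr
      exact hdle n
  -- (2β + d)/log n → 0
  have hC : Tendsto (fun n : ℕ => (2 * β + d n) / Real.log n) atTop (nhds 0) := by
    have h := ((tendsto_const_nhds (x := (2*β:ℝ)) (f := atTop)).div_atTop hlog).add hB
    have h0 : Tendsto (fun n : ℕ => 2 * β / Real.log n + (d n : ℝ) / Real.log n)
        atTop (nhds 0) := by simpa using h
    refine h0.congr fun n => ?_
    rw [← add_div]
  -- log n / (2β + d) → ∞
  have hD : Tendsto (fun n : ℕ => Real.log n / (2 * β + d n)) atTop atTop := by
    have hC' : Tendsto (fun n : ℕ => (2 * β + d n) / Real.log n) atTop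
        (nhdsWithin 0 (Set.Ioi 0)) := by
      refine tendsto_nhdsWithin_of_tendsto_nhds_of_eventually_within _ hC ?_
      filter_upwards [hlog.eventually_gt_atTop 0] with n hn
      exact div_pos (hdpos n) hn
    have := hC'.inv_tendsto_nhdsGT_zero
    refine this.congr fun n => ?_
    simp [inv_div]
  -- the log of ψ tends to -∞
  have hG : Tendsto (fun n : ℕ =>
      ((d n : ℝ) * Real.log (d n) - β * Real.log n) / (2 * β + d n)) atTop atBot := by
    have hprod : Tendsto (fun n : ℕ =>
        ((d n : ℝ) * Real.log (d n) / Real.log n - β) * (Real.log n / (2 * β + d n)))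
        atTop atBot := by
      have hf : Tendsto (fun n : ℕ => (d n : ℝ) * Real.log (d n) / Real.log n - β)
          atTop (nhds (-β)) := by
        simpa using hA.sub (tendsto_const_nhds (x := β))
      exact hf.neg_mul_atTop (by linarith) hD
    refine hprod.congr' ?_
    filter_upwards [hlog.eventually_gt_atTop 0] with n hn
    have h1 : Real.log n ≠ 0 := ne_of_gt hn
    have h2 : (2 * β + (d n:ℝ)) ≠ 0 := ne_of_gt (hdpos n)
    field_simp
  -- rewrite ψ as exp of that
  have hexp : Tendsto (fun n : ℕ =>
      Real.exp (((d n : ℝ) * Real.log (d n) - β * Real.log n) / (2 * β + d n)))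
      atTop (nhds 0) := Real.tendsto_exp_atBot.comp hG
  refine hexp.congr' ?_
  filter_upwards [eventually_gt_atTop 0] with n hn
  have hnpos : (0:ℝ) < (n:ℝ) := by exact_mod_cast hn
  have hdp : (0:ℝ) < (d n : ℝ) := by exact_mod_cast hd n
  have hbase : (0:ℝ) < ((d n : ℝ) ^ (d n : ℝ)) / (n : ℝ) ^ β :=
    div_pos (Real.rpow_pos_of_pos hdp _) (Real.rpow_pos_of_pos hnpos _)
  rw [Real.rpow_def_of_pos hbase, Real.log_div (ne_of_gt (Real.rpow_pos_of_pos hdp _))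
    (ne_of_gt (Real.rpow_pos_of_pos hnpos _)), Real.log_rpow hdp, Real.log_rpow hnpos]
  rw [mul_one_div]
end
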